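/- Let n > 1 be odd and let Φ_n(q) ∈ ℤ[q] be the n-th cyclotomic polynomial. Then for every k ≥ 0, the congruence (q^(1-n); q²)_k · (q^(1+n); q²)_k ≡ (q; q²)_k² (mod Φ_n(q)²) holds in the ring ℤ[q, q⁻¹] (equivalently, after multiplying by a suitable power of q, in ℤ[q]). -/

import Mathlib

/-!
With `a = q^(1-n+2i)` and `x = q^n`, the `i`-th factors satisfy
`(1 - a)(1 - a x²) - (1 - a x)² = -a (x - 1)²`, and `Φ_n(q) ∣ q^n - 1`; so the congruence
holds factor by factor modulo `Φ_n(q)²`, hence for the products.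
-/

open LaurentPolynomial Finset

theorem Finset.dvd_prod_sub_prod_of_dvd_sub {R ι : Type*} [CommRing R] {d : R} {s : Finset ι}
    {f g : ι → R} (h : ∀ i ∈ s, d ∣ f i - g i) : d ∣ ∏ i ∈ s, f i - ∏ i ∈ s, g i := by
  simp only [← Ideal.mem_span_singleton, ← SModEq.sub_mem] at h ⊢
  exact SModEq.prod h

theorem sq_dvd_one_sub_mul_one_sub_mul_sq_sub_sq {R : Type*} [CommRing R] {d x : R} (a : R)
    (hd : d ∣ x - 1) : d ^ 2 ∣ (1 - a) * (1 - a * x ^ 2) - (1 - a * x) ^ 2 := by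
  have hfactor : (1 - a) * (1 - a * x ^ 2) - (1 - a * x) ^ 2 = -a * (x - 1) ^ 2 := by ring
  rw [hfactor]
  exact (pow_dvd_pow_of_dvd hd 2).mul_left _

theorem Polynomial.cyclotomic_toLaurent_dvd_T_sub_one (n : ℕ) (R : Type*) [CommRing R] :
    (cyclotomic n R).toLaurent ∣ T (n : ℤ) - 1 := by
  have h := _root_.map_dvd (toLaurent (R := R)) (cyclotomic.dvd_X_pow_sub_one n R)
  simpa [T_pow] using h

theorem stmt1_general (n : ℕ) (k : ℕ) :
    ((Polynomial.cyclotomic n ℤ).toLaurent) ^ 2 ∣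
      (∏ i ∈ range k, (1 - T (1 - (n : ℤ) + 2 * i)))
        * (∏ i ∈ range k, (1 - T (1 + (n : ℤ) + 2 * i)))
      - (∏ i ∈ range k, (1 - T (1 + 2 * (i : ℤ)))) ^ 2 := by
  rw [← prod_mul_distrib, ← prod_pow]
  refine dvd_prod_sub_prod_of_dvd_sub fun i _ => ?_
  have hplus : (T (1 + n + 2 * i) : ℤ[T;T⁻¹]) = T (1 - n + 2 * i) * T (n : ℤ) ^ 2 := by
    rw [T_pow, ← T_add]; ring_nf
  have hmid : (T (1 + 2 * i) : ℤ[T;T⁻¹]) = T (1 - n + 2 * i) * T (n : ℤ) := by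
    rw [← T_add]; ring_nf
  rw [hplus, hmid]
  exact sq_dvd_one_sub_mul_one_sub_mul_sq_sub_sq _
    (Polynomial.cyclotomic_toLaurent_dvd_T_sub_one n ℤ)

/-- For odd `n > 1` and all `k`, `(q^(1-n); q²)_k (q^(1+n); q²)_k ≡ (q; q²)_k²
(mod Φ_n(q)²)` in the Laurent polynomial ring `ℤ[q, q⁻¹]`. -/
theorem stmt1 (n : ℕ) (hn : 1 < n) (hodd : Odd n) (k : ℕ) :
    ((Polynomial.cyclotomic n ℤ).toLaurent) ^ 2 ∣
      (∏ i ∈ range k, (1 - T (1 - (n : ℤ) + 2 * i)))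
        * (∏ i ∈ range k, (1 - T (1 + (n : ℤ) + 2 * i)))
      - (∏ i ∈ range k, (1 - T (1 + 2 * (i : ℤ)))) ^ 2 :=
  stmt1_general n k
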